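/- arXiv:2009.09616 — 10 statements merged into one kernel-verified Lean document; each statement's English description precedes it below -/
import Mathlib

section
/- Let E be a finite set, e ∈ E, and T a family of subsets of E∖{e}. Let S be the family T regarded as a family of subsets of E (so that e belongs to no member of S; e is a loop of S). Then S is a powerful set over E if and only if T is a powerful set over E∖{e}. -/
/-- A family `S` of subsets of a finite set `E` is *powerful* if every member of `S`
is a subset of `E` and, for every `X ⊆ E`, the number of members of `S` that are
subsets of `X` is a power of 2. -/
def Powerful {α : Type*} [DecidableEq α] (E : Finset α) (S : Finset (Finset α)) : Prop :=
  (∀ Y ∈ S, Y ⊆ E) ∧ ∀ X ⊆ E, ∃ k : ℕ, (S.filter (fun Y => Y ⊆ X)).card = 2 ^ k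

section

open Finset

variable {α : Type*} [DecidableEq α]

theorem Finset.filter_subset_erase_eq_of_forall_notMem {S : Finset (Finset α)} {a : α}
    (ha : ∀ Y ∈ S, a ∉ Y) (X : Finset α) :
    S.filter (· ⊆ X.erase a) = S.filter (· ⊆ X) :=
  filter_congr fun Y hY => by rw [subset_erase, and_iff_left (ha Y hY)]

namespace Powerful

variable {E F : Finset α} {S : Finset (Finset α)}

theorem mono (hS : Powerful E S) (hFE : F ⊆ E) (hSF : ∀ Y ∈ S, Y ⊆ F) : Powerful F S :=
  ⟨hSF, fun X hX => hS.2 X (hX.trans hFE)⟩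

theorem of_erase {e : α} (hS : Powerful (E.erase e) S) : Powerful E S := by
  obtain ⟨hSsub, hcount⟩ := hS
  refine ⟨fun Y hY => (hSsub Y hY).trans (erase_subset e E), fun X hX => ?_⟩
  have he : ∀ Y ∈ S, e ∉ Y := fun Y hY heY => notMem_erase e E (hSsub Y hY heY)
  rw [← filter_subset_erase_eq_of_forall_notMem he X]
  exact hcount (X.erase e) (erase_subset_erase e hX)

end Powerful

end

theorem loop_extension_powerful_iff_general {α : Type*} [DecidableEq α]
    (E : Finset α) (e : α)
    (T : Finset (Finset α)) (hT : ∀ Y ∈ T, Y ⊆ E.erase e) :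
    Powerful E T ↔ Powerful (E.erase e) T :=
  ⟨fun h => h.mono (Finset.erase_subset e E) hT, Powerful.of_erase⟩

/-- The loop extension: `T` over `E∖{e}` regarded as a family over `E` is powerful
iff `T` is powerful over `E∖{e}`. -/
theorem loop_extension_powerful_iff {α : Type*} [DecidableEq α]
    (E : Finset α) (e : α) (he : e ∈ E)
    (T : Finset (Finset α)) (hT : ∀ Y ∈ T, Y ⊆ E.erase e) :
    Powerful E T ↔ Powerful (E.erase e) T :=
  loop_extension_powerful_iff_general E e T hT
end

section
/- Let E be a finite set, e ∈ E, and T a family of subsets of E∖{e}. Let S = {X : X ∈ T} ∪ {X ∪ {e} : X ∈ T} (the coloop extension of T by e). Then S is a powerful set over E if and only if T is a powerful set over E∖{e}. -/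
namespace Finset

variable {α : Type*} [DecidableEq α] {e : α} {T : Finset (Finset α)}

lemma filter_subset_erase_eq_filter_subset (heT : ∀ Y ∈ T, e ∉ Y) (X : Finset α) :
    T.filter (· ⊆ X.erase e) = T.filter (· ⊆ X) :=
  filter_congr fun Y hY => by rw [subset_erase, and_iff_left (heT Y hY)]

lemma injOn_insert_of_notMem (heT : ∀ Y ∈ T, e ∉ Y) :
    Set.InjOn (insert e) (T : Set (Finset α)) := fun Y hY Z hZ hYZ => by
  rw [← erase_insert (heT Y hY), ← erase_insert (heT Z hZ), hYZ]

lemma card_filter_subset_image_insert (heT : ∀ Y ∈ T, e ∉ Y) (X : Finset α) :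
    ((T.image (insert e)).filter (· ⊆ X)).card =
      if e ∈ X then (T.filter (· ⊆ X.erase e)).card else 0 := by
  rw [filter_image, card_image_of_injOn
    ((injOn_insert_of_notMem heT).mono (coe_subset.mpr (filter_subset _ T)))]
  split_ifs with heX
  · simp only [insert_subset_iff, heX, true_and, filter_subset_erase_eq_filter_subset heT]
  · simp [insert_subset_iff, heX]

lemma card_filter_subset_union_image_insert (heT : ∀ Y ∈ T, e ∉ Y) (X : Finset α) :
    ((T ∪ T.image (insert e)).filter (· ⊆ X)).card =
      (if e ∈ X then 2 else 1) * (T.filter (· ⊆ X.erase e)).card := by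
  have hdisj : Disjoint T (T.image (insert e)) := by
    simp only [disjoint_left, mem_image, not_exists, not_and]
    rintro Y hY Z - rfl
    exact heT _ hY (mem_insert_self e Z)
  rw [filter_union, card_union_of_disjoint (disjoint_filter_filter hdisj),
    card_filter_subset_image_insert heT, filter_subset_erase_eq_filter_subset heT]
  split_ifs <;> ring

end Finset

open Finset

/-- The coloop extension `S = {X : X ∈ T} ∪ {X ∪ {e} : X ∈ T}` of `T` by `e` is
powerful over `E` iff `T` is powerful over `E∖{e}`. -/
theorem coloop_extension_powerful_iff {α : Type*} [DecidableEq α]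
    (E : Finset α) (e : α) (he : e ∈ E)
    (T : Finset (Finset α)) (hT : ∀ Y ∈ T, Y ⊆ E.erase e) :
    Powerful E (T ∪ T.image (insert e)) ↔ Powerful (E.erase e) T := by
  have heT : ∀ Y ∈ T, e ∉ Y := fun Y hY => (subset_erase.mp (hT Y hY)).2
  have hcount := card_filter_subset_union_image_insert heT
  constructor
  · rintro ⟨-, hpow⟩
    refine ⟨hT, fun X hX => ?_⟩
    have heX : e ∉ X := (subset_erase.mp hX).2
    simpa [hcount, heX, erase_eq_of_notMem heX] using hpow X (hX.trans (erase_subset e E))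
  · rintro ⟨-, hpow⟩
    refine ⟨fun Y hY => ?_, fun X hX => ?_⟩
    · rcases mem_union.mp hY with hY | hY
      · exact (hT Y hY).trans (erase_subset e E)
      · obtain ⟨Z, hZ, rfl⟩ := mem_image.mp hY
        exact insert_subset he ((hT Z hZ).trans (erase_subset e E))
    · obtain ⟨k, hk⟩ := hpow (X.erase e) (erase_subset_erase e hX)
      rw [hcount, hk]
      split_ifs
      exacts [⟨k + 1, (pow_succ' 2 k).symm⟩, ⟨k, one_mul _⟩]
end

section
/- Let E be a finite set, e ∈ E, and T a family of subsets of E∖{e}. Let S = {X : X ∈ T} ∪ {X ∪ {e} : X ⊆ E∖{e}, X ∉ T} (the star extension of T by e). Then S is a powerful set over E if and only if T is a powerful set over E∖{e}. -/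
namespace Finset

variable {α : Type*} [DecidableEq α]

def starExtension (e : α) (F : Finset α) (T : Finset (Finset α)) : Finset (Finset α) :=
  T ∪ (F.powerset \ T).image (insert e)

variable {e : α} {F X : Finset α} {T : Finset (Finset α)}

theorem mem_starExtension {Y : Finset α} :
    Y ∈ starExtension e F T ↔ Y ∈ T ∨ ∃ Z ⊆ F, Z ∉ T ∧ insert e Z = Y := by
  simp [starExtension, and_assoc]

theorem starExtension_subset_insert (hT : ∀ Y ∈ T, Y ⊆ F) :
    ∀ Y ∈ starExtension e F T, Y ⊆ insert e F := by
  intro Y hY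
  rcases mem_starExtension.mp hY with hY | ⟨Z, hZF, -, rfl⟩
  · exact (hT Y hY).trans (subset_insert e F)
  · exact insert_subset_insert e hZF

theorem filter_starExtension_of_notMem (heX : e ∉ X) :
    (starExtension e F T).filter (· ⊆ X) = T.filter (· ⊆ X) := by
  ext Y
  simp only [mem_filter, mem_starExtension]
  constructor
  · rintro ⟨hY | ⟨Z, -, -, rfl⟩, hYX⟩
    · exact ⟨hY, hYX⟩
    · exact absurd (hYX (mem_insert_self e Z)) heX
  · rintro ⟨hY, hYX⟩
    exact ⟨Or.inl hY, hYX⟩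

theorem card_filter_starExtension_of_mem (heF : e ∉ F) (hT : ∀ Y ∈ T, Y ⊆ F)
    (heX : e ∈ X) (hXF : X.erase e ⊆ F) :
    ((starExtension e F T).filter (· ⊆ X)).card = 2 ^ (X.erase e).card := by
  rw [← card_powerset]
  refine card_nbij' (·.erase e) (fun Z => if Z ∈ T then Z else insert e Z)
    (fun Y hY => ?_) (fun Z hZ => ?_) (fun Y hY => ?_) (fun Z hZ => ?_)
  · exact mem_powerset.mpr (erase_subset_erase e (mem_filter.mp hY).2)
  · have hZX : Z ⊆ X.erase e := mem_powerset.mp hZ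
    have hZX' : Z ⊆ X := hZX.trans (erase_subset e X)
    simp only [coe_filter, Set.mem_ofPred_eq, mem_starExtension]
    split_ifs with hZT
    · exact ⟨Or.inl hZT, hZX'⟩
    · exact ⟨Or.inr ⟨Z, hZX.trans hXF, hZT, rfl⟩, insert_subset heX hZX'⟩
  · rcases mem_starExtension.mp (mem_filter.mp hY).1 with hYT | ⟨Z, hZF, hZT, rfl⟩
    · have heY : e ∉ Y := fun h => heF (hT Y hYT h)
      simp [erase_eq_of_notMem heY, hYT]
    · have heZ : e ∉ Z := fun h => heF (hZF h)
      simp [erase_insert heZ, hZT]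
  · have heZ : e ∉ Z := fun h => (notMem_erase e X) (mem_powerset.mp hZ h)
    dsimp only
    split_ifs
    exacts [erase_eq_of_notMem heZ, erase_insert heZ]

theorem powerful_insert_starExtension_iff (heF : e ∉ F) (hT : ∀ Y ∈ T, Y ⊆ F) :
    Powerful (insert e F) (starExtension e F T) ↔ Powerful F T := by
  constructor
  · rintro ⟨-, hcount⟩
    refine ⟨hT, fun X hXF => ?_⟩
    rw [← filter_starExtension_of_notMem (fun h => heF (hXF h))]
    exact hcount X (hXF.trans (subset_insert e F))
  · rintro ⟨-, hcount⟩
    refine ⟨starExtension_subset_insert hT, fun X hXF => ?_⟩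
    by_cases heX : e ∈ X
    · have hX'F : X.erase e ⊆ F := by
        simpa [erase_insert heF] using erase_subset_erase e hXF
      exact ⟨_, card_filter_starExtension_of_mem heF hT heX hX'F⟩
    · rw [filter_starExtension_of_notMem heX]
      exact hcount X ((subset_insert_iff_of_notMem heX).mp hXF)

end Finset

/-- The star extension `S = {X : X ∈ T} ∪ {X ∪ {e} : X ⊆ E∖{e}, X ∉ T}` of `T` by `e`
is powerful over `E` iff `T` is powerful over `E∖{e}`. -/
theorem star_extension_powerful_iff {α : Type*} [DecidableEq α]
    (E : Finset α) (e : α) (he : e ∈ E)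
    (T : Finset (Finset α)) (hT : ∀ Y ∈ T, Y ⊆ E.erase e) :
    Powerful E (T ∪ ((E.erase e).powerset \ T).image (insert e)) ↔
      Powerful (E.erase e) T := by
  have key := Finset.powerful_insert_starExtension_iff (Finset.notMem_erase e E) hT
  rwa [Finset.insert_erase he] at key
end

section
/- Every powerful set is determined by its set of cocircuits: if S and T are powerful sets over the same finite ground set E and S and T have the same cocircuits, then S = T. -/
/-- The cocircuits of a family `S`: the minimal nonempty members of `S`, i.e. the
nonempty `C ∈ S` having no nonempty proper subset in `S`. -/
def Cocircuits {α : Type*} (S : Finset (Finset α)) : Set (Finset α) :=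
  {C | C ∈ S ∧ C ≠ ∅ ∧ ∀ D ∈ S, D ⊂ C → D = ∅}

open Finset

theorem Nat.eq_zero_of_two_pow_add_one_eq_two_pow {k l : ℕ} (h : 2 ^ l + 1 = 2 ^ k) : l = 0 := by
  rcases l with _ | l
  · rfl
  rcases k with _ | k
  · have := Nat.one_le_two_pow (n := l + 1)
    omega
  rw [pow_succ, pow_succ] at h
  omega

theorem mem_iff_mem_cocircuits {α : Type*} {S : Finset (Finset α)} {X : Finset α} (hX : X ≠ ∅)
    (hmin : ∀ D ∈ S, D ⊂ X → D = ∅) : X ∈ S ↔ X ∈ Cocircuits S :=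
  ⟨fun hXS => ⟨hXS, hX, hmin⟩, fun hXC => hXC.1⟩

section

variable {α : Type*} [DecidableEq α]

theorem card_filter_subset_eq_card_filter_ssubset_add (U : Finset (Finset α)) (X : Finset α) :
    #(U.filter (· ⊆ X)) = #(U.filter (· ⊂ X)) + if X ∈ U then 1 else 0 := by
  have hsplit : U.filter (· ⊆ X) = U.filter (· ⊂ X) ∪ U.filter (· = X) := by
    simp_rw [subset_iff_ssubset_or_eq, filter_or]
  rw [hsplit, card_union_of_disjoint (disjoint_filter.2 fun _ _ h => h.ne), filter_eq']
  split_ifs <;> simp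

namespace Powerful

variable {E : Finset α} {S : Finset (Finset α)}

theorem empty_mem (hS : Powerful E S) : ∅ ∈ S := by
  obtain ⟨k, hk⟩ := hS.2 ∅ (empty_subset E)
  obtain ⟨Y, hY⟩ := card_pos.1 (hk ▸ Nat.two_pow_pos k)
  rw [mem_filter, subset_empty] at hY
  exact hY.2 ▸ hY.1

theorem mem_iff_of_two_le_card {X : Finset α} (hS : Powerful E S) (hXE : X ⊆ E)
    (hm : 2 ≤ #(S.filter (· ⊂ X))) : X ∈ S ↔ ∃ k, #(S.filter (· ⊂ X)) + 1 = 2 ^ k := by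
  obtain ⟨l, hl⟩ := hS.2 X hXE
  rw [card_filter_subset_eq_card_filter_ssubset_add] at hl
  by_cases hXS : X ∈ S
  · simp only [hXS, if_true] at hl
    exact iff_of_true hXS ⟨l, hl⟩
  · simp only [hXS, if_false, add_zero] at hl
    refine iff_of_false hXS fun ⟨k, hk⟩ => ?_
    rw [hl] at hk hm
    rw [Nat.eq_zero_of_two_pow_add_one_eq_two_pow hk] at hm
    omega

end Powerful

theorem Powerful.mem_iff_mem_of_forall_ssubset {E : Finset α} {S T : Finset (Finset α)}
    (hS : Powerful E S) (hT : Powerful E T) (h : Cocircuits S = Cocircuits T) {X : Finset α}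
    (hX : ∀ Y ⊂ X, Y ∈ S ↔ Y ∈ T) : X ∈ S ↔ X ∈ T := by
  by_cases hXE : X ⊆ E
  swap
  · exact iff_of_false (fun hXS => hXE (hS.1 X hXS)) (fun hXT => hXE (hT.1 X hXT))
  obtain rfl | hX0 := eq_or_ne X ∅
  · exact iff_of_true hS.empty_mem hT.empty_mem
  by_cases hmin : ∀ D ∈ S, D ⊂ X → D = ∅
  · have hminT : ∀ D ∈ T, D ⊂ X → D = ∅ := fun D hD hDX => hmin D ((hX D hDX).2 hD) hDX
    rw [mem_iff_mem_cocircuits hX0 hmin, mem_iff_mem_cocircuits hX0 hminT, h]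
  simp only [not_forall] at hmin
  obtain ⟨D, hDS, hDX, hD0⟩ := hmin
  have hbelow : S.filter (· ⊂ X) = T.filter (· ⊂ X) := by
    ext Y
    simp only [mem_filter]
    exact ⟨fun ⟨hY, hYX⟩ => ⟨(hX Y hYX).1 hY, hYX⟩, fun ⟨hY, hYX⟩ => ⟨(hX Y hYX).2 hY, hYX⟩⟩
  have hm : 2 ≤ #(S.filter (· ⊂ X)) := by
    have hpair : {∅, D} ⊆ S.filter (· ⊂ X) := by
      simp only [insert_subset_iff, singleton_subset_iff, mem_filter]
      exact ⟨⟨hS.empty_mem, empty_ssubset.2 (nonempty_iff_ne_empty.2 hX0)⟩, hDS, hDX⟩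
    simpa [card_pair (Ne.symm hD0)] using card_le_card hpair
  rw [hS.mem_iff_of_two_le_card hXE hm, hT.mem_iff_of_two_le_card hXE (hbelow ▸ hm), hbelow]

end

/-- Every powerful set is determined by its set of cocircuits. -/
theorem powerful_eq_of_cocircuits_eq {α : Type*} [DecidableEq α]
    (E : Finset α) (S T : Finset (Finset α))
    (hS : Powerful E S) (hT : Powerful E T)
    (h : Cocircuits S = Cocircuits T) : S = T := by
  ext X
  induction X using Finset.strongInduction with
  | H X ih => exact hS.mem_iff_mem_of_forall_ssubset hT h ih
end

section
/- Let S be a powerful set over a finite set E and T a powerful set over a finite set F with E ∩ F = ∅, and let S ⊕ T = {X ∪ Y : X ∈ S, Y ∈ T}, a family of subsets of E ∪ F (the direct sum). Then the set of cocircuits of S ⊕ T equals the union of the set of cocircuits of S and the set of cocircuits of T. -/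
/-! As the ground sets are disjoint, the members of the direct sum below a member `C` of one
summand all lie in that summand,
so `C` is minimal in the sum exactly when it is minimal in its summand; and a sum `X ∪ Y`
with both parts nonempty is never minimal, since `X` is a proper subset of it lying in the sum.
Both summands contain `∅` because a powerful family has `2 ^ k ≥ 1` members below `∅`.
The direct sum is Mathlib's `S ⊻ T`, as `⊔` is `∪` on finsets. -/

section

open scoped FinsetFamily

variable {α : Type*}

lemma Powerful.empty_mem_s5 [DecidableEq α] {E : Finset α} {S : Finset (Finset α)}
    (hS : Powerful E S) : ∅ ∈ S := by
  obtain ⟨k, hk⟩ := hS.2 ∅ (Finset.empty_subset E)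
  obtain ⟨Y, hY⟩ := Finset.card_pos.mp (hk ▸ Nat.two_pow_pos k)
  rw [Finset.mem_filter, Finset.subset_empty] at hY
  exact hY.2 ▸ hY.1

lemma mem_cocircuits_iff_of_subset {S U : Finset (Finset α)} {C : Finset α} (hSU : S ⊆ U)
    (hC : ∀ D ∈ U, D ⊆ C → D ∈ S) : C ∈ Cocircuits U ↔ C ∈ Cocircuits S := by
  refine ⟨fun ⟨hCU, hne, hmin⟩ => ⟨hC C hCU le_rfl, hne, fun D hD => hmin D (hSU hD)⟩,
    fun ⟨hCS, hne, hmin⟩ => ⟨hSU hCS, hne, fun D hD hDC => hmin D (hC D hD hDC.1) hDC⟩⟩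

variable [DecidableEq α] {S T : Finset (Finset α)}

lemma subset_sups_of_empty_mem (hT : ∅ ∈ T) : S ⊆ S ⊻ T :=
  fun X hX => Finset.mem_sups.mpr ⟨X, hX, ∅, hT, Finset.union_empty X⟩

lemma mem_left_of_mem_sups_of_subset (hST : ∀ X ∈ S, ∀ Y ∈ T, Disjoint X Y) {C D : Finset α}
    (hC : C ∈ S) (hD : D ∈ S ⊻ T) (hDC : D ⊆ C) : D ∈ S := by
  obtain ⟨X, hX, Y, hY, rfl⟩ := Finset.mem_sups.mp hD
  have hY_empty : Y = ∅ := (hST C hC Y hY).eq_bot_of_ge (le_sup_right.trans hDC)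
  simpa [hY_empty] using hX

lemma mem_or_mem_of_mem_cocircuits_sups (hT : ∅ ∈ T) (hST : ∀ X ∈ S, ∀ Y ∈ T, Disjoint X Y)
    {C : Finset α} (hC : C ∈ Cocircuits (S ⊻ T)) : C ∈ S ∨ C ∈ T := by
  obtain ⟨hCST, -, hmin⟩ := hC
  obtain ⟨X, hX, Y, hY, rfl⟩ := Finset.mem_sups.mp hCST
  rcases Finset.eq_empty_or_nonempty Y with rfl | hY_ne
  · exact .inl (by simpa using hX)
  rcases Finset.eq_empty_or_nonempty X with rfl | hX_ne
  · exact .inr (by simpa using hY)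
  have hX_ssub : X ⊂ X ⊔ Y := left_lt_sup.mpr fun hYX =>
    (Finset.disjoint_self_iff_empty Y).not.mpr hY_ne.ne_empty ((hST X hX Y hY).mono_left hYX)
  exact absurd (hmin X (subset_sups_of_empty_mem hT hX) hX_ssub) hX_ne.ne_empty

theorem cocircuits_sups (hS : ∅ ∈ S) (hT : ∅ ∈ T) (hST : ∀ X ∈ S, ∀ Y ∈ T, Disjoint X Y) :
    Cocircuits (S ⊻ T) = Cocircuits S ∪ Cocircuits T := by
  have hTS : ∀ Y ∈ T, ∀ X ∈ S, Disjoint Y X := fun Y hY X hX => (hST X hX Y hY).symm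
  have iff_left {C} (hC : C ∈ S) : C ∈ Cocircuits (S ⊻ T) ↔ C ∈ Cocircuits S :=
    mem_cocircuits_iff_of_subset (subset_sups_of_empty_mem hT)
      fun _ hD => mem_left_of_mem_sups_of_subset hST hC hD
  have iff_right {C} (hC : C ∈ T) : C ∈ Cocircuits (S ⊻ T) ↔ C ∈ Cocircuits T := by
    rw [Finset.sups_comm]
    exact mem_cocircuits_iff_of_subset (subset_sups_of_empty_mem hS)
      fun _ hD => mem_left_of_mem_sups_of_subset hTS hC hD
  ext C
  refine ⟨fun hC => ?_, ?_⟩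
  · rcases mem_or_mem_of_mem_cocircuits_sups hT hST hC with hCS | hCT
    · exact .inl ((iff_left hCS).mp hC)
    · exact .inr ((iff_right hCT).mp hC)
  · rintro (hC | hC)
    · exact (iff_left hC.1).mpr hC
    · exact (iff_right hC.1).mpr hC

end

/-- The cocircuits of the direct sum `S ⊕ T = {X ∪ Y : X ∈ S, Y ∈ T}` of powerful
sets over disjoint ground sets are exactly the cocircuits of `S` together with
the cocircuits of `T`. -/
theorem cocircuits_direct_sum {α : Type*} [DecidableEq α]
    (E F : Finset α) (hEF : Disjoint E F)
    (S T : Finset (Finset α)) (hS : Powerful E S) (hT : Powerful F T) :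
    Cocircuits ((S ×ˢ T).image fun p => p.1 ∪ p.2) = Cocircuits S ∪ Cocircuits T :=
  cocircuits_sups hS.empty_mem_s5 hT.empty_mem_s5
    fun X hX Y hY => hEF.mono (hS.1 X hX) (hT.1 Y hY)
end

section
/- Let f be a powerful multiset over a finite set E. Then f(∅) divides f(X) for every X ⊆ E. -/
open Finset

/-- A *powerful multiset* over a finite set `E` is an indicator function
`f : Finset α → ℕ` with `f ∅ ≥ 1` such that, for every `X ⊆ E`, there is
`k ∈ ℕ` with `(∑_{Y ⊆ E, Y ∩ X = ∅} f Y) · 2^k = ∑_{Y ⊆ E} f Y` (this `k`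
is the rank `Qf(X)`). -/
def PowerfulMultiset {α : Type*} [DecidableEq α] (E : Finset α) (f : Finset α → ℕ) : Prop :=
  1 ≤ f ∅ ∧ ∀ X ⊆ E, ∃ k : ℕ,
    (∑ Y ∈ E.powerset.filter (fun Y => Y ∩ X = ∅), f Y) * 2 ^ k = ∑ Y ∈ E.powerset, f Y

/-!
Taking `X = E` in the definition gives `f ∅ · 2^m = ∑_{Y ⊆ E} f Y`, and taking `X = E \ A`
gives `(∑_{Y ⊆ A} f Y) · 2^k = ∑_{Y ⊆ E} f Y`. Since `f ∅ ≤ ∑_{Y ⊆ A} f Y`, we get `k ≤ m`,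
so `∑_{Y ⊆ A} f Y = f ∅ · 2^(m-k)` is a multiple of `f ∅` for every `A ⊆ E`. Möbius inversion
over the subsets of `X`, i.e. strong induction on `X`, then shows that `f ∅ ∣ f X`.
-/

theorem Finset.filter_powerset_inter_eq_empty {α : Type*} [DecidableEq α] (E X : Finset α) :
    E.powerset.filter (fun Y => Y ∩ X = ∅) = (E \ X).powerset := by
  ext Y
  simp only [mem_filter, mem_powerset, subset_sdiff, ← disjoint_iff_inter_eq_empty]

theorem Nat.dvd_of_mul_pow_eq_mul_pow {a g b k m : ℕ} (hb : 1 < b) (ha : 0 < a) (hag : a ≤ g)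
    (h : g * b ^ k = a * b ^ m) : a ∣ g := by
  have hkm : k ≤ m := by
    by_contra! hmk
    have : a * b ^ m < g * b ^ k :=
      Nat.mul_lt_mul_of_le_of_lt hag (Nat.pow_lt_pow_right hb hmk) (ha.trans_le hag)
    omega
  refine ⟨b ^ (m - k), Nat.eq_of_mul_eq_mul_right (pow_pos (zero_lt_one.trans hb) k) ?_⟩
  rw [h, mul_assoc, ← pow_add, Nat.sub_add_cancel hkm]

theorem Finset.dvd_of_forall_dvd_sum_powerset {α : Type*} [DecidableEq α] {E : Finset α}
    {f : Finset α → ℕ} {d : ℕ} (h : ∀ A ⊆ E, d ∣ ∑ Y ∈ A.powerset, f Y) : ∀ X ⊆ E, d ∣ f X := by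
  intro X
  induction X using Finset.strongInduction with
  | _ X ih =>
    intro hX
    have hproper : d ∣ ∑ Y ∈ X.powerset.erase X, f Y := by
      refine dvd_sum fun Y hY => ?_
      have hYX : Y ⊆ X := mem_powerset.mp (mem_of_mem_erase hY)
      exact ih Y (ssubset_iff_subset_ne.mpr ⟨hYX, ne_of_mem_erase hY⟩) (hYX.trans hX)
    have hall := h X hX
    rw [← insert_erase (mem_powerset_self X), sum_insert (notMem_erase _ _)] at hall
    exact (Nat.dvd_add_left hproper).mp hall

theorem PowerfulMultiset.empty_dvd_sum_powerset {α : Type*} [DecidableEq α] {E : Finset α}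
    {f : Finset α → ℕ} (hf : PowerfulMultiset E f) {A : Finset α} (hA : A ⊆ E) :
    f ∅ ∣ ∑ Y ∈ A.powerset, f Y := by
  obtain ⟨hpos, hrank⟩ := hf
  obtain ⟨m, hm⟩ := hrank E subset_rfl
  obtain ⟨k, hk⟩ := hrank (E \ A) sdiff_subset
  rw [filter_powerset_inter_eq_empty, sdiff_self, bot_eq_empty, powerset_empty, sum_singleton] at hm
  rw [filter_powerset_inter_eq_empty, sdiff_sdiff_self_left, inter_eq_right.mpr hA] at hk
  exact Nat.dvd_of_mul_pow_eq_mul_pow one_lt_two hpos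
    (single_le_sum (fun _ _ => Nat.zero_le _) (empty_mem_powerset A)) (hk.trans hm.symm)

/-- For a powerful multiset `f` over `E`, the multiplicity `f ∅` of the empty set
divides `f X` for every `X ⊆ E`. -/
theorem powerfulMultiset_empty_dvd {α : Type*} [DecidableEq α]
    (E : Finset α) (f : Finset α → ℕ) (hf : PowerfulMultiset E f) :
    ∀ X ⊆ E, f ∅ ∣ f X :=
  dvd_of_forall_dvd_sum_powerset fun _ hA => hf.empty_dvd_sum_powerset hA
end

section
/- Let f be a powerful multiset over a finite set E and let e ∈ E. Define the contraction f/e on subsets of E∖{e} by (f/e)(X) = f(X). Then f/e is a powerful multiset over E∖{e}, and for every X ⊆ E∖{e}, Q(f/e)(X) = Qf(X ∪ {e}) − Qf({e}). -/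
/-!
The subsets of `E` avoiding `e` are exactly the subsets of `E ∖ {e}`, and those avoiding
`X ∪ {e}` are the subsets of `E ∖ {e}` avoiding `X`. So the total mass of `f/e` is the mass of
`f` avoiding `e`, the mass of `f/e` avoiding `X` is the mass of `f` avoiding `X ∪ {e}`, and
`2 ^ Qf(X ∪ {e}) = 2 ^ Q(f/e)(X) * 2 ^ Qf({e})`. Powerfulness of `f/e` follows because the
ratio of the two masses, being at least `1`, is a quotient `2 ^ Qf(X ∪ {e}) / 2 ^ Qf({e})` of
powers of two with the larger exponent on top.
-/

open Finset

lemma Nat.mul_pow_sub_eq_of_mul_pow_eq {p a b m n : ℕ} (hp : 1 < p) (ha : 0 < a) (hab : a ≤ b)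
    (h : a * p ^ m = b * p ^ n) : a * p ^ (m - n) = b := by
  have hnm : n ≤ m := by
    have : a * p ^ n ≤ a * p ^ m := h ▸ Nat.mul_le_mul_right _ hab
    exact (Nat.pow_le_pow_iff_right hp).1 (Nat.le_of_mul_le_mul_left this ha)
  apply Nat.eq_of_mul_eq_mul_right (pow_pos (zero_lt_one.trans hp) n)
  rw [mul_assoc, ← pow_add, Nat.sub_add_cancel hnm, h]

section PowersetFilter

variable {α : Type*} [DecidableEq α]

lemma powerset_filter_inter_singleton_eq_empty (E : Finset α) (e : α) :
    E.powerset.filter (fun Y => Y ∩ {e} = ∅) = (E.erase e).powerset := by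
  ext Y
  simp only [mem_filter, mem_powerset, subset_erase, ← disjoint_iff_inter_eq_empty,
    disjoint_singleton_right]

lemma powerset_filter_inter_insert_eq_empty (E X : Finset α) (e : α) :
    E.powerset.filter (fun Y => Y ∩ insert e X = ∅) =
      (E.erase e).powerset.filter (fun Y => Y ∩ X = ∅) := by
  ext Y
  simp only [mem_filter, mem_powerset, subset_erase, ← disjoint_iff_inter_eq_empty,
    disjoint_insert_right]
  tauto

lemma one_le_sum_powerset_filter_inter_eq_empty (E X : Finset α) {f : Finset α → ℕ}
    (hf : 1 ≤ f ∅) : 1 ≤ ∑ Y ∈ E.powerset.filter (fun Y => Y ∩ X = ∅), f Y :=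
  hf.trans (single_le_sum (fun _ _ => Nat.zero_le _) (by simp))

end PowersetFilter

/-- Contraction of a powerful multiset: for `e ∈ E`, the contraction `f/e`,
defined on subsets of `E∖{e}` by `(f/e)(X) = f(X)` (i.e. `f` itself, viewed
over the ground set `E.erase e`), is a powerful multiset over `E∖{e}`, and its
rank function satisfies `Q(f/e)(X) = Qf(X ∪ {e}) − Qf({e})` for all
`X ⊆ E∖{e}`. -/
theorem powerfulMultiset_contraction {α : Type*} [DecidableEq α]
    (E : Finset α) (f : Finset α → ℕ) (hf : PowerfulMultiset E f) (e : α) (he : e ∈ E) :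
    PowerfulMultiset (E.erase e) f ∧
    ∀ X ⊆ E.erase e, ∀ k ke kXe : ℕ,
      ((∑ Y ∈ (E.erase e).powerset.filter (fun Y => Y ∩ X = ∅), f Y) * 2 ^ k =
        ∑ Y ∈ (E.erase e).powerset, f Y) →
      ((∑ Y ∈ E.powerset.filter (fun Y => Y ∩ ({e} : Finset α) = ∅), f Y) * 2 ^ ke =
        ∑ Y ∈ E.powerset, f Y) →
      ((∑ Y ∈ E.powerset.filter (fun Y => Y ∩ insert e X = ∅), f Y) * 2 ^ kXe =
        ∑ Y ∈ E.powerset, f Y) →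
      k + ke = kXe := by
  obtain ⟨hf_empty, hrank⟩ := hf
  have hpos := fun X => one_le_sum_powerset_filter_inter_eq_empty (E.erase e) X hf_empty
  simp only [powerset_filter_inter_singleton_eq_empty, powerset_filter_inter_insert_eq_empty]
  refine ⟨⟨hf_empty, fun X hX => ?_⟩, fun X _ k ke kXe hk hke hkXe => ?_⟩
  · obtain ⟨ke, hke⟩ := hrank {e} (singleton_subset_iff.2 he)
    obtain ⟨kXe, hkXe⟩ := hrank (insert e X) (insert_subset he (hX.trans (erase_subset e E)))
    simp only [powerset_filter_inter_singleton_eq_empty,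
      powerset_filter_inter_insert_eq_empty] at hke hkXe
    exact ⟨kXe - ke, Nat.mul_pow_sub_eq_of_mul_pow_eq one_lt_two (hpos X)
      (sum_le_sum_of_subset (filter_subset _ _)) (hkXe.trans hke.symm)⟩
  · refine Nat.pow_right_injective le_rfl (Nat.eq_of_mul_eq_mul_left (hpos X) ?_)
    beta_reduce
    rw [pow_add, ← mul_assoc, hk, hke, hkXe]
end

section
/- Let S be a powerful set over a finite set E and let e ∈ E be a deletable element of S. Then the set S∖e = {X ⊆ E∖{e} : X ∈ S or X ∪ {e} ∈ S} is a powerful set over E∖{e}, and |S∖e| = |S|/2 if {e} ∈ S (i.e., e is a coloop), while |S∖e| = |S| otherwise. -/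
open Finset

/-- An element `e ∈ E` is *deletable* from `S` if for every `X ⊆ E∖{e}`, the number
of sets among `X` and `X ∪ {e}` belonging to `S` is either 0, or equals 2 when
`{e} ∈ S`, or equals 1 when `{e} ∉ S`. -/
def Deletable {α : Type*} [DecidableEq α] (E : Finset α) (S : Finset (Finset α)) (e : α) :
    Prop :=
  ∀ X ⊆ E.erase e,
    (if X ∈ S then 1 else 0) + (if insert e X ∈ S then 1 else 0) = 0 ∨
    ({e} ∈ S ∧ (if X ∈ S then 1 else 0) + (if insert e X ∈ S then 1 else 0) = 2) ∨
    ({e} ∉ S ∧ (if X ∈ S then 1 else 0) + (if insert e X ∈ S then 1 else 0) = 1)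

/-!
Group the members of `S` below `X ∪ {e}` (with `e ∉ X`) by `Z ↦ Z ∖ {e}`: the class of
`Y ⊆ X` is `{Y, Y ∪ {e}} ∩ S`. Deletability says that every nonempty class has the same size
`c`, namely `2` if `{e} ∈ S` and `1` otherwise, and the nonempty classes are indexed by the
members of `S∖e` below `X`. Hence `|S below X ∪ {e}| = c · |S∖e below X|`; a divisor of a
power of `2` is a power of `2`, and `X = E ∖ {e}` gives `|S| = c · |S∖e|`.
-/

section

variable {α : Type*} [DecidableEq α]

def deletion (E : Finset α) (S : Finset (Finset α)) (e : α) : Finset (Finset α) :=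
  (E.erase e).powerset.filter (fun X => X ∈ S ∨ insert e X ∈ S)

theorem card_filter_subset_eq_sum (S : Finset (Finset α)) (T : Finset α) :
    (S.filter (· ⊆ T)).card = ∑ Y ∈ T.powerset, if Y ∈ S then 1 else 0 := by
  rw [← card_filter]
  congr 1
  ext Y
  simp only [mem_filter, mem_powerset, and_comm]

theorem card_filter_subset_insert_eq_sum (S : Finset (Finset α)) {e : α} {X : Finset α}
    (heX : e ∉ X) :
    (S.filter (· ⊆ insert e X)).card =
      ∑ Y ∈ X.powerset, ((if Y ∈ S then 1 else 0) + (if insert e Y ∈ S then 1 else 0)) := by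
  rw [card_filter_subset_eq_sum, sum_powerset_insert heX, sum_add_distrib]

theorem card_filter_subset_deletion_eq_sum (E : Finset α) (S : Finset (Finset α)) (e : α)
    {X : Finset α} (hX : X ⊆ E.erase e) :
    ((deletion E S e).filter (· ⊆ X)).card =
      ∑ Y ∈ X.powerset, if Y ∈ S ∨ insert e Y ∈ S then 1 else 0 := by
  rw [card_filter_subset_eq_sum]
  refine sum_congr rfl fun Y hY => ?_
  have hYE : Y ∈ (E.erase e).powerset := mem_powerset.2 ((mem_powerset.1 hY).trans hX)
  simp only [deletion, mem_filter, hYE, true_and]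

theorem Deletable.card_pair_eq {E : Finset α} {S : Finset (Finset α)} {e : α}
    (hd : Deletable E S e) {Y : Finset α} (hY : Y ⊆ E.erase e) :
    (if Y ∈ S then 1 else 0) + (if insert e Y ∈ S then 1 else 0) =
      (if {e} ∈ S then 2 else 1) * (if Y ∈ S ∨ insert e Y ∈ S then 1 else 0) := by
  rcases hd Y hY with h | ⟨hcoloop, h⟩ | ⟨hcoloop, h⟩ <;> split_ifs at h ⊢ <;> simp_all

theorem Deletable.card_filter_subset_insert {E : Finset α} {S : Finset (Finset α)} {e : α}
    (hd : Deletable E S e) {X : Finset α} (hX : X ⊆ E.erase e) :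
    (S.filter (· ⊆ insert e X)).card =
      (if {e} ∈ S then 2 else 1) * ((deletion E S e).filter (· ⊆ X)).card := by
  have heX : e ∉ X := fun h => notMem_erase e E (hX h)
  rw [card_filter_subset_insert_eq_sum S heX, card_filter_subset_deletion_eq_sum E S e hX,
    mul_sum]
  exact sum_congr rfl fun Y hY => hd.card_pair_eq ((mem_powerset.1 hY).trans hX)

theorem Deletable.powerful_deletion {E : Finset α} {S : Finset (Finset α)} {e : α}
    (hd : Deletable E S e) (hS : Powerful E S) (he : e ∈ E) :
    Powerful (E.erase e) (deletion E S e) := by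
  refine ⟨fun Y hY => mem_powerset.1 (mem_filter.1 hY).1, fun X hX => ?_⟩
  obtain ⟨k, hk⟩ := hS.2 (insert e X) (insert_subset he (hX.trans (erase_subset e E)))
  have hdvd : ((deletion E S e).filter (· ⊆ X)).card ∣ 2 ^ k :=
    ⟨_, by rw [← hk, hd.card_filter_subset_insert hX, mul_comm]⟩
  obtain ⟨i, -, hi⟩ := (Nat.dvd_prime_pow Nat.prime_two).1 hdvd
  exact ⟨i, hi⟩

theorem Deletable.card_eq_mul_card_deletion {E : Finset α} {S : Finset (Finset α)} {e : α}
    (hS : Powerful E S) (he : e ∈ E) (hd : Deletable E S e) :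
    S.card = (if {e} ∈ S then 2 else 1) * (deletion E S e).card := by
  have h := hd.card_filter_subset_insert (subset_refl (E.erase e))
  rwa [insert_erase he, filter_true_of_mem hS.1, filter_true_of_mem
    (s := deletion E S e) fun Y hY => mem_powerset.1 (mem_filter.1 hY).1] at h

end

/-- If `e` is a deletable element of a powerful set `S` over `E`, then
`S∖e = {X ⊆ E∖{e} : X ∈ S or X ∪ {e} ∈ S}` is a powerful set over `E∖{e}`, with
`|S∖e| = |S|/2` if `{e} ∈ S` and `|S∖e| = |S|` otherwise. -/
theorem deletion_powerful_and_card {α : Type*} [DecidableEq α]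
    (E : Finset α) (S : Finset (Finset α)) (hS : Powerful E S) (e : α) (he : e ∈ E)
    (hd : Deletable E S e) :
    Powerful (E.erase e)
      ((E.erase e).powerset.filter (fun X => X ∈ S ∨ insert e X ∈ S)) ∧
    (({e} ∈ S →
        ((E.erase e).powerset.filter (fun X => X ∈ S ∨ insert e X ∈ S)).card * 2 =
          S.card) ∧
      ({e} ∉ S →
        ((E.erase e).powerset.filter (fun X => X ∈ S ∨ insert e X ∈ S)).card =
          S.card)) := by
  have hcard := hd.card_eq_mul_card_deletion hS he
  refine ⟨hd.powerful_deletion hS he, fun hcoloop => ?_, fun hcoloop => ?_⟩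
  · rw [hcard, if_pos hcoloop, mul_comm]
    rfl
  · rw [hcard, if_neg hcoloop, one_mul]
    rfl
end

section
/- Let S and T be families of subsets of a finite set E. If for every X ⊆ E the number of members of S disjoint from X equals the number of members of T disjoint from X, then S = T. -/
/-!
Taking `X = E \ W`, the hypothesis says that `S` and `T` have the same number of members
contained in each `W ⊆ E`. Strong induction on `W` then gives `W ∈ S ↔ W ∈ T`: the members
strictly below `W` already agree, so the two counts at `W` can only differ by `W` itself.
-/

open Finset

namespace Finset

variable {α : Type*} [DecidableEq α]

theorem inter_sdiff_eq_empty_iff_subset {Y E W : Finset α} (hY : Y ⊆ E) :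
    Y ∩ (E \ W) = ∅ ↔ Y ⊆ W := by
  rw [← inter_sdiff_assoc, inter_eq_left.mpr hY, sdiff_eq_empty_iff_subset]

theorem card_filter_subset_eq_card_filter_ssubset_add (S : Finset (Finset α)) (W : Finset α) :
    #{Y ∈ S | Y ⊆ W} = #{Y ∈ S | Y ⊂ W} + if W ∈ S then 1 else 0 := by
  have hsplit : {Y ∈ S | Y ⊆ W} = {Y ∈ S | Y ⊂ W} ∪ {Y ∈ S | Y = W} := by
    rw [← filter_or]
    exact filter_congr fun Y _ => subset_iff_ssubset_or_eq
  have hdisj : Disjoint {Y ∈ S | Y ⊂ W} {Y ∈ S | Y = W} :=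
    disjoint_filter.mpr fun Y _ hY => hY.ne
  rw [hsplit, card_union_of_disjoint hdisj, filter_eq']
  split_ifs <;> rfl

theorem eq_of_card_filter_subset_eq {S T : Finset (Finset α)}
    (h : ∀ W ∈ S ∪ T, #{Y ∈ S | Y ⊆ W} = #{Y ∈ T | Y ⊆ W}) : S = T := by
  ext W
  induction W using Finset.strongInduction with
  | H W ih =>
    by_cases hW : W ∈ S ∪ T
    · have hbelow : {Y ∈ S | Y ⊂ W} = {Y ∈ T | Y ⊂ W} := by
        ext Y
        simp only [mem_filter, and_congr_left_iff]
        exact ih Y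
      have hcount := h W hW
      rw [card_filter_subset_eq_card_filter_ssubset_add,
        card_filter_subset_eq_card_filter_ssubset_add, hbelow, Nat.add_left_cancel_iff] at hcount
      split_ifs at hcount <;> simp_all
    · simp only [mem_union, not_or] at hW
      simp only [hW.1, hW.2]

end Finset

/-- If two families `S`, `T` of subsets of a finite set `E` have, for every `X ⊆ E`,
the same number of members disjoint from `X`, then `S = T`. -/
theorem eq_of_disjoint_counts_eq {α : Type*} [DecidableEq α]
    (E : Finset α) (S T : Finset (Finset α))
    (hS : ∀ Y ∈ S, Y ⊆ E) (hT : ∀ Y ∈ T, Y ⊆ E)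
    (h : ∀ X ⊆ E,
      (S.filter (fun Y => Y ∩ X = ∅)).card = (T.filter (fun Y => Y ∩ X = ∅)).card) :
    S = T := by
  refine eq_of_card_filter_subset_eq fun W _ => ?_
  have hW := h (E \ W) sdiff_subset
  rwa [filter_congr fun Y hY => inter_sdiff_eq_empty_iff_subset (hS Y hY),
    filter_congr fun Y hY => inter_sdiff_eq_empty_iff_subset (hT Y hY)] at hW
end

section
/- Let f be a powerful multiset over a finite set E whose rank function is subcardinal, i.e., Qf(X) ≤ |X| for all X ⊆ E. Then f is (up to scaling) a linear powerful set: there exists a family T of subsets of E with ∅ ∈ T which is closed under symmetric difference, such that f(X) = f(∅) for every X ∈ T and f(X) = 0 for every X ∉ T. -/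
open Finset

/-!
Let `f̂(Z) = ∑_{Y ⊆ E} (-1)^{|Z ∩ Y|} f(Y)` be the Walsh–Fourier coefficients of `f` and
`S = ∑_Y f(Y)`. Summing `f̂` over the subsets of `Z` gives `2^{|Z|}` times the mass of `f` on
the sets disjoint from `Z`, that is `2^{|Z| - Qf(Z)} S`; since `Qf(Z) ≤ |Z|`, induction on `Z`
shows `S ∣ f̂(Z)`. As `f ≥ 0` and `f(∅) > 0`, also `-S < f̂(Z) ≤ S`, so `f̂(Z) ∈ {0, S}`, and
`f̂(Z) = S` forces `|Z ∩ Y|` to be even whenever `f(Y) ≠ 0`. Hence the support of `f` lies in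
the dual code `T` of the support of `f̂`, and Fourier inversion shows that `f = f(∅)` on `T`.
-/

open scoped symmDiff

section Walsh

variable {α R : Type*} [DecidableEq α] [CommRing R]

theorem neg_one_pow_card_inter_eq_prod (Z B : Finset α) :
    (-1 : R) ^ #(Z ∩ B) = ∏ i ∈ Z, if i ∈ B then -1 else 1 := by
  rw [prod_ite_mem, prod_const]

theorem neg_one_pow_card_inter_symmDiff (Z X Y : Finset α) :
    (-1 : R) ^ #(Z ∩ X ∆ Y) = (-1) ^ #(Z ∩ X) * (-1) ^ #(Z ∩ Y) := by
  simp only [neg_one_pow_card_inter_eq_prod, ← prod_mul_distrib, mem_symmDiff]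
  refine prod_congr rfl fun i _ => ?_
  by_cases hX : i ∈ X <;> by_cases hY : i ∈ Y <;> simp [hX, hY]

theorem sum_powerset_neg_one_pow_card_inter (A B : Finset α) :
    ∑ Z ∈ A.powerset, (-1 : R) ^ #(Z ∩ B) = if Disjoint A B then 2 ^ #A else 0 := by
  simp only [neg_one_pow_card_inter_eq_prod, ← prod_one_add]
  split_ifs with h
  · rw [← prod_const]
    refine prod_congr rfl fun i hi => ?_
    rw [if_neg (disjoint_left.1 h hi)]
    norm_num
  · obtain ⟨i, hiA, hiB⟩ := not_disjoint_iff.1 h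
    exact prod_eq_zero hiA (by simp [hiB])

variable (E : Finset α)

def walshCoeff (f : Finset α → R) (Z : Finset α) : R :=
  ∑ Y ∈ E.powerset, (-1) ^ #(Z ∩ Y) * f Y

def walshSupport [DecidableEq R] (f : Finset α → R) : Finset (Finset α) :=
  {Z ∈ E.powerset | walshCoeff E f Z ≠ 0}

def dualCode (D : Finset (Finset α)) : Finset (Finset α) :=
  {Y ∈ E.powerset | ∀ Z ∈ D, Even #(Z ∩ Y)}

def HasSubcardinalRank (f : Finset α → R) : Prop :=
  ∀ X ⊆ E, ∃ k ≤ #X, (∑ Y ∈ E.powerset with Y ∩ X = ∅, f Y) * 2 ^ k = ∑ Y ∈ E.powerset, f Y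

theorem sum_powerset_walshCoeff (f : Finset α → R) (Z : Finset α) :
    ∑ W ∈ Z.powerset, walshCoeff E f W = 2 ^ #Z * ∑ Y ∈ E.powerset with Y ∩ Z = ∅, f Y := by
  simp only [walshCoeff]
  rw [sum_comm, mul_sum, sum_filter]
  refine sum_congr rfl fun Y _ => ?_
  rw [← sum_mul, sum_powerset_neg_one_pow_card_inter]
  simp only [disjoint_iff_inter_eq_empty, inter_comm Z Y]
  split_ifs <;> simp

theorem sum_sub_walshCoeff (f : Finset α → R) (Z : Finset α) :
    ∑ Y ∈ E.powerset, f Y - walshCoeff E f Z =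
      ∑ Y ∈ E.powerset, (1 - (-1) ^ #(Z ∩ Y)) * f Y := by
  simp only [walshCoeff, ← sum_sub_distrib, sub_mul, one_mul]

theorem sum_add_walshCoeff (f : Finset α → R) (Z : Finset α) :
    ∑ Y ∈ E.powerset, f Y + walshCoeff E f Z =
      ∑ Y ∈ E.powerset, (1 + (-1) ^ #(Z ∩ Y)) * f Y := by
  simp only [walshCoeff, ← sum_add_distrib, add_mul, one_mul]

theorem empty_mem_dualCode (D : Finset (Finset α)) : ∅ ∈ dualCode E D := by
  simp [dualCode]

variable {E}

theorem sum_neg_one_pow_mul_walshCoeff (f : Finset α → R) {Y : Finset α} (hY : Y ⊆ E) :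
    ∑ Z ∈ E.powerset, (-1) ^ #(Z ∩ Y) * walshCoeff E f Z = 2 ^ #E * f Y := by
  simp only [walshCoeff, mul_sum, ← mul_assoc, ← neg_one_pow_card_inter_symmDiff]
  rw [sum_comm, sum_eq_single_of_mem Y (mem_powerset.2 hY)]
  · simp
  · intro Y' hY' hne
    rw [← sum_mul, sum_powerset_neg_one_pow_card_inter, if_neg, zero_mul]
    intro hdisj
    have hsub : Y ∆ Y' ⊆ E := symmDiff_subset_union.trans (union_subset hY (mem_powerset.1 hY'))
    exact hne (symmDiff_eq_bot.1 (hdisj.symm.eq_bot_of_le hsub)).symm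

theorem sum_dvd_walshCoeff {f : Finset α → R} (hrank : HasSubcardinalRank E f) {Z : Finset α}
    (hZ : Z ⊆ E) : (∑ Y ∈ E.powerset, f Y) ∣ walshCoeff E f Z := by
  induction Z using Finset.strongInduction with
  | H Z ih =>
    obtain ⟨k, hk, hsum⟩ := hrank Z hZ
    have htotal : (∑ Y ∈ E.powerset, f Y) ∣ ∑ W ∈ Z.powerset, walshCoeff E f W := by
      rw [sum_powerset_walshCoeff, ← hsum, ← Nat.sub_add_cancel hk, pow_add]
      exact ⟨2 ^ (#Z - k), by ring⟩
    have hproper :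
        (∑ Y ∈ E.powerset, f Y) ∣ ∑ W ∈ Z.powerset.erase Z, walshCoeff E f W := by
      refine dvd_sum fun W hW => ?_
      rw [mem_erase, mem_powerset] at hW
      have hWZ : W ⊂ Z := hW.2.ssubset_of_ne hW.1
      exact ih W hWZ (hWZ.subset.trans hZ)
    rw [← add_sum_erase _ _ (mem_powerset_self Z)] at htotal
    exact (dvd_add_left hproper).1 htotal

theorem mem_walshSupport [DecidableEq R] {f : Finset α → R} {Z : Finset α} :
    Z ∈ walshSupport E f ↔ Z ⊆ E ∧ walshCoeff E f Z ≠ 0 := by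
  rw [walshSupport, mem_filter, mem_powerset]

theorem mem_dualCode {D : Finset (Finset α)} {Y : Finset α} :
    Y ∈ dualCode E D ↔ Y ⊆ E ∧ ∀ Z ∈ D, Even #(Z ∩ Y) := by
  rw [dualCode, mem_filter, mem_powerset]

theorem symmDiff_mem_dualCode {D : Finset (Finset α)} {X Y : Finset α}
    (hX : X ∈ dualCode E D) (hY : Y ∈ dualCode E D) : X ∆ Y ∈ dualCode E D := by
  rw [mem_dualCode] at hX hY ⊢
  refine ⟨symmDiff_subset_union.trans (union_subset hX.1 hY.1), fun Z hZ => ?_⟩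
  rw [← neg_one_pow_eq_one_iff_even (R := ℤ) (by decide), neg_one_pow_card_inter_symmDiff,
    (hX.2 Z hZ).neg_one_pow, (hY.2 Z hZ).neg_one_pow, one_mul]

theorem apply_eq_apply_empty_of_mem_dualCode_walshSupport [DecidableEq R] [IsDomain R]
    [CharZero R] {f : Finset α → R} {Y : Finset α} (hY : Y ∈ dualCode E (walshSupport E f)) :
    f Y = f ∅ := by
  rw [mem_dualCode] at hY
  have hchar : ∀ Z ∈ E.powerset,
      (-1) ^ #(Z ∩ Y) * walshCoeff E f Z = (-1) ^ #(Z ∩ ∅) * walshCoeff E f Z := by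
    intro Z hZ
    by_cases h : walshCoeff E f Z = 0
    · simp [h]
    · simp [(hY.2 Z (mem_walshSupport.2 ⟨mem_powerset.1 hZ, h⟩)).neg_one_pow]
  have h2 : 2 ^ #E * f Y = 2 ^ #E * f ∅ := by
    rw [← sum_neg_one_pow_mul_walshCoeff f hY.1, sum_congr rfl hchar,
      sum_neg_one_pow_mul_walshCoeff f (empty_subset E)]
  exact mul_left_cancel₀ (pow_ne_zero _ two_ne_zero) h2

end Walsh

section Integer

variable {α : Type*} [DecidableEq α] {E : Finset α} {f : Finset α → ℤ}

theorem walshCoeff_le_sum (hf : ∀ Y ⊆ E, 0 ≤ f Y) (Z : Finset α) :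
    walshCoeff E f Z ≤ ∑ Y ∈ E.powerset, f Y := by
  rw [← sub_nonneg, sum_sub_walshCoeff]
  refine sum_nonneg fun Y hY => mul_nonneg ?_ (hf Y (mem_powerset.1 hY))
  linarith [(abs_le.1 (abs_neg_one_pow (α := ℤ) #(Z ∩ Y)).le).2]

theorem neg_sum_lt_walshCoeff (hf : ∀ Y ⊆ E, 0 ≤ f Y) (hempty : 0 < f ∅) (Z : Finset α) :
    -∑ Y ∈ E.powerset, f Y < walshCoeff E f Z := by
  rw [neg_lt_iff_pos_add, add_comm, sum_add_walshCoeff]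
  calc 0 < (1 + (-1) ^ #(Z ∩ ∅)) * f ∅ := by simpa using hempty
    _ ≤ ∑ Y ∈ E.powerset, (1 + (-1) ^ #(Z ∩ Y)) * f Y := by
      refine single_le_sum (fun Y hY => mul_nonneg ?_ (hf Y (mem_powerset.1 hY)))
        (empty_mem_powerset E)
      linarith [(abs_le.1 (abs_neg_one_pow (α := ℤ) #(Z ∩ Y)).le).1]

theorem even_card_inter_of_walshCoeff_eq_sum (hf : ∀ Y ⊆ E, 0 ≤ f Y) {Z : Finset α}
    (hZ : walshCoeff E f Z = ∑ Y ∈ E.powerset, f Y) {Y : Finset α} (hY : Y ⊆ E)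
    (hfY : f Y ≠ 0) : Even #(Z ∩ Y) := by
  have hzero : ∑ Y ∈ E.powerset, (1 - (-1) ^ #(Z ∩ Y)) * f Y = 0 := by
    rw [← sum_sub_walshCoeff, hZ, sub_self]
  have hterm := (sum_eq_zero_iff_of_nonneg fun Y hY => mul_nonneg ?_ (hf Y (mem_powerset.1 hY))).1
    hzero Y (mem_powerset.2 hY)
  · rw [← neg_one_pow_eq_one_iff_even (R := ℤ) (by decide)]
    linarith [(mul_eq_zero.1 hterm).resolve_right hfY]
  · linarith [(abs_le.1 (abs_neg_one_pow (α := ℤ) #(Z ∩ Y)).le).2]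

theorem walshCoeff_eq_zero_or_eq_sum (hrank : HasSubcardinalRank E f) (hf : ∀ Y ⊆ E, 0 ≤ f Y)
    (hempty : 0 < f ∅) {Z : Finset α} (hZ : Z ⊆ E) :
    walshCoeff E f Z = 0 ∨ walshCoeff E f Z = ∑ Y ∈ E.powerset, f Y := by
  have hS : 0 < ∑ Y ∈ E.powerset, f Y := hempty.trans_le <|
    single_le_sum (fun Y hY => hf Y (mem_powerset.1 hY)) (empty_mem_powerset E)
  obtain ⟨m, hm⟩ := sum_dvd_walshCoeff hrank hZ
  have hle := walshCoeff_le_sum hf Z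
  have hlt := neg_sum_lt_walshCoeff hf hempty Z
  rw [hm] at hle hlt ⊢
  have hm1 : m ≤ 1 := le_of_mul_le_mul_left (by linarith) hS
  have hm0 : -1 < m := lt_of_mul_lt_mul_left (by linarith) hS.le
  interval_cases m <;> simp

theorem mem_dualCode_walshSupport_of_ne_zero (hrank : HasSubcardinalRank E f)
    (hf : ∀ Y ⊆ E, 0 ≤ f Y) (hempty : 0 < f ∅) {Y : Finset α} (hY : Y ⊆ E) (hfY : f Y ≠ 0) :
    Y ∈ dualCode E (walshSupport E f) := by
  refine mem_dualCode.2 ⟨hY, fun Z hZ => ?_⟩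
  obtain ⟨hZE, hZ0⟩ := mem_walshSupport.1 hZ
  have hZS := (walshCoeff_eq_zero_or_eq_sum hrank hf hempty hZE).resolve_left hZ0
  exact even_card_inter_of_walshCoeff_eq_sum hf hZS hY hfY

end Integer

/-- A powerful multiset over `E` whose rank function is subcardinal
(`Qf(X) ≤ |X|` for all `X ⊆ E`) is, up to scaling, a linear powerful set: there is
a family `T` of subsets of `E`, containing `∅` and closed under symmetric
difference, with `f X = f ∅` for `X ∈ T` and `f X = 0` for `X ⊆ E` with `X ∉ T`. -/
theorem powerfulMultiset_subcardinal_linear {α : Type*} [DecidableEq α]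
    (E : Finset α) (f : Finset α → ℕ) (hf : PowerfulMultiset E f)
    (hsub : ∀ X ⊆ E, ∀ k : ℕ,
      (∑ Y ∈ E.powerset.filter (fun Y => Y ∩ X = ∅), f Y) * 2 ^ k =
        (∑ Y ∈ E.powerset, f Y) → k ≤ X.card) :
    ∃ T : Finset (Finset α), (∀ Y ∈ T, Y ⊆ E) ∧ ∅ ∈ T ∧
      (∀ X ∈ T, ∀ Y ∈ T, symmDiff X Y ∈ T) ∧
      (∀ X ⊆ E, (X ∈ T → f X = f ∅) ∧ (X ∉ T → f X = 0)) := by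
  obtain ⟨hempty, hpow⟩ := hf
  have hrank : HasSubcardinalRank E fun Y => (f Y : ℤ) := by
    intro X hX
    obtain ⟨k, hk⟩ := hpow X hX
    exact ⟨k, hsub X hX k hk, by beta_reduce; exact_mod_cast hk⟩
  have hnonneg : ∀ Y ⊆ E, 0 ≤ (f Y : ℤ) := fun Y _ => Int.natCast_nonneg (f Y)
  refine ⟨dualCode E (walshSupport E fun Y => (f Y : ℤ)), fun Y hY => (mem_dualCode.1 hY).1,
    empty_mem_dualCode E _, fun X hX Y hY => symmDiff_mem_dualCode hX hY,
    fun X hX => ⟨fun hXT => ?_, fun hXT => ?_⟩⟩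
  · exact_mod_cast apply_eq_apply_empty_of_mem_dualCode_walshSupport hXT
  · by_contra hfX
    exact hXT (mem_dualCode_walshSupport_of_ne_zero hrank hnonneg (by exact_mod_cast hempty) hX
      (by exact_mod_cast hfX))
end
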